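/- arXiv:0909.4095 — 8 statements merged into one kernel-verified Lean document; each statement's English description precedes it below -/
import Mathlib

section
/- A metric space X is large scale paracompact if and only if for each δ > 0 there exist a set S, a simplicial complex K ⊆ Δ(S), and a δ-partition of unity f: X → K. -/
open Function Metric ENNReal

noncomputable section

/-- `ℓ¹(S)`: real-valued functions on `S` with finite `ℓ¹`-norm, with the `ℓ¹` metric. -/
abbrev ellOne (S : Type u) : Type u := lp (fun _ : S => ℝ) 1

/-- The full simplex `Δ(S) ⊆ ℓ¹(S)`. -/
def fullSimplex (S : Type u) : Set (ellOne S) :=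
  {p | (∀ s, 0 ≤ p s) ∧ (support (p : S → ℝ)).Finite ∧ ∑' s, p s = 1}

/-- The `n`-skeleton `Δ(S)^(n)` of the full simplex. -/
def skeleton (S : Type u) (n : ℕ) : Set (ellOne S) :=
  {p ∈ fullSimplex S | (support (p : S → ℝ)).encard ≤ n + 1}

/-- A simplicial complex on `S`: a subset of `Δ(S)` closed under passing to
points whose support is contained in the support of a member. -/
def IsSimplicialComplex {S : Type u} (K : Set (ellOne S)) : Prop :=
  K ⊆ fullSimplex S ∧
    ∀ p ∈ K, ∀ q ∈ fullSimplex S,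
      support (q : S → ℝ) ⊆ support (p : S → ℝ) → q ∈ K

/-- The star of a vertex `v` in `K`. -/
def star {S : Type u} (K : Set (ellOne S)) (v : S) : Set (ellOne S) :=
  {p ∈ K | 0 < p v}

/-- `f` is `(λ, C)`-Lipschitz. -/
def IsLipschitzLC {X Y : Type*} [MetricSpace X] [MetricSpace Y]
    (l C : ℝ) (f : X → Y) : Prop :=
  ∀ x y, dist (f x) (f y) ≤ l * dist x y + C

/-- A family of sets is uniformly bounded. -/
def UniformlyBounded {X : Type*} [MetricSpace X] {ι : Type*} (U : ι → Set X) : Prop :=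
  ∃ M : ℝ, ∀ i, ∀ x ∈ U i, ∀ y ∈ U i, dist x y ≤ M

/-- `U` is a cover of the whole space. -/
def IsCover {X : Type*} {ι : Type*} (U : ι → Set X) : Prop := ∀ x, ∃ i, x ∈ U i

/-- The Lebesgue number `inf_x sup_i dist(x, X∖Uᵢ)` of a family, as a value in `ℝ≥0∞`. -/
def lebesgue {X : Type*} [MetricSpace X] {ι : Type*} (U : ι → Set X) : ℝ≥0∞ :=
  ⨅ x : X, ⨆ i, EMetric.infEdist x (U i)ᶜ

/-- The multiplicity of `U` is at most `m`. -/
def MultiplicityLE {X : Type*} [MetricSpace X] {ι : Type*} (U : ι → Set X) (m : ℕ) : Prop :=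
  ∀ x : X, {i | 0 < Metric.infDist x ((U i)ᶜ)}.encard ≤ m

/-- `f : X → K` is a `δ`-partition of unity. -/
def IsDeltaPartitionOfUnity {X : Type*} [MetricSpace X] {S : Type u}
    (δ : ℝ) (K : Set (ellOne S)) (f : X → ellOne S) : Prop :=
  (∀ x, f x ∈ K) ∧ IsLipschitzLC δ δ f ∧
    UniformlyBounded (fun v : S => f ⁻¹' star K v) ∧
    ENNReal.ofReal (1 / δ) ≤ lebesgue (fun v : S => f ⁻¹' star K v)

/-- `X` is large scale paracompact. -/
def LSParacompact (X : Type u) [MetricSpace X] : Prop :=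
  ∀ (ι : Type u) (U : ι → Set X), IsCover U → UniformlyBounded U →
    ∀ l C : ℝ, 0 < l → 0 < C →
      ∃ (S : Type u) (K : Set (ellOne S)) (f : X → ellOne S),
        IsSimplicialComplex K ∧ (∀ x, f x ∈ K) ∧ IsLipschitzLC l C f ∧
        UniformlyBounded (fun v : S => f ⁻¹' star K v) ∧
        ∀ i, ∃ v : S, U i ⊆ f ⁻¹' star K v

/-- `X` has asymptotic dimension at most `n`. -/
def AsdimLE (X : Type u) [MetricSpace X] (n : ℕ) : Prop :=
  ∀ R : ℝ, 0 < R → ∃ (ι : Type u) (U : ι → Set X),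
    IsCover U ∧ UniformlyBounded U ∧ MultiplicityLE U (n + 1) ∧
    ENNReal.ofReal R ≤ lebesgue U

/-- `X` has Property A. -/
def PropertyA (X : Type u) [MetricSpace X] : Prop :=
  ∀ R ε : ℝ, 0 < R → 0 < ε →
    ∃ (M : ℝ) (S : Type u) (φ : S → X → ℝ), 0 < M ∧
      (∀ s x, 0 ≤ φ s x ∧ φ s x ≤ 1) ∧
      (∀ x, (support fun s => φ s x).Finite) ∧
      (∀ x, ∑' s, φ s x = 1) ∧
      (∀ x y, dist x y ≤ R → ∑' s, |φ s x - φ s y| < ε) ∧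
      (∀ s, ∀ x ∈ support (φ s), ∀ y ∈ support (φ s), dist x y ≤ M)

/-- `f` has `(R, ε)` variation. -/
def HasVariation {X Y : Type*} [MetricSpace X] [MetricSpace Y] (R ε : ℝ) (f : X → Y) : Prop :=
  ∀ x y, dist x y ≤ R → dist (f x) (f y) < ε

/-- `g` is a coarse embedding. -/
def CoarseEmbedding {X Y : Type*} [MetricSpace X] [MetricSpace Y] (g : X → Y) : Prop :=
  ∃ ρminus ρplus : ℝ → ℝ, Monotone ρminus ∧ Monotone ρplus ∧
    Filter.Tendsto ρminus Filter.atTop Filter.atTop ∧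
    ∀ x y, ρminus (dist x y) ≤ dist (g x) (g y) ∧ dist (g x) (g y) ≤ ρplus (dist x y)

/-- `X` has bounded geometry: balls of any fixed radius have uniformly bounded cardinality. -/
def BoundedGeometry (X : Type*) [MetricSpace X] : Prop :=
  ∀ r : ℝ, 0 < r → ∃ N : ℕ, ∀ x : X, (Metric.ball x r).encard ≤ N

/-!
Both directions compare the scale of a cover with the Lebesgue number of the cover by preimages
of open stars. If every `1/δ`-ball lies in some star preimage, the star cover has Lebesgue number
at least `1/δ`. Conversely, if the star cover of a `(δ, δ)`-Lipschitz map has Lebesgue number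
`1/δ > M`, then every set of diameter at most `M` lies in a single star preimage, and `δ ≤ λ, C`
makes the map `(λ, C)`-Lipschitz.
-/

theorem uniformlyBounded_closedBall {X : Type*} [MetricSpace X] (r : ℝ) :
    UniformlyBounded (fun x : X => closedBall x r) :=
  ⟨2 * r, fun _ _ hx _ hy => (dist_triangle_right _ _ _).trans (by
    linarith [mem_closedBall.mp hx, mem_closedBall.mp hy])⟩

theorem UniformlyBounded.exists_subset_closedBall {X : Type*} [MetricSpace X] {ι : Type*}
    {U : ι → Set X} (hU : UniformlyBounded U) :
    ∃ M : ℝ, ∀ i, ∀ x ∈ U i, U i ⊆ closedBall x M := by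
  obtain ⟨M, hM⟩ := hU
  exact ⟨M, fun i x hx y hy => mem_closedBall'.mpr (hM i x hx y hy)⟩

theorem IsLipschitzLC.mono {X Y : Type*} [MetricSpace X] [MetricSpace Y] {f : X → Y}
    {l C l' C' : ℝ} (hf : IsLipschitzLC l C f) (hl : l ≤ l') (hC : C ≤ C') :
    IsLipschitzLC l' C' f := fun x y =>
  (hf x y).trans (add_le_add (mul_le_mul_of_nonneg_right hl dist_nonneg) hC)

theorem ofReal_le_lebesgue_of_closedBall_subset {X : Type*} [MetricSpace X] {ι : Type*} {V : ι → Set X} {r : ℝ}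
    (hV : ∀ x, ∃ i, closedBall x r ⊆ V i) : ENNReal.ofReal r ≤ lebesgue V := by
  refine le_iInf fun x => ?_
  obtain ⟨i, hi⟩ := hV x
  refine le_iSup_of_le i (Metric.le_infEDist.mpr fun y hy => ?_)
  have hxy : r < dist y x := not_le.mp fun h => hy (hi (mem_closedBall.mpr h))
  rw [edist_dist, dist_comm]
  exact ENNReal.ofReal_le_ofReal hxy.le

theorem exists_closedBall_subset_of_ofReal_lt_lebesgue {X : Type*} [MetricSpace X] {ι : Type*}
    {V : ι → Set X} {r : ℝ} (hV : ENNReal.ofReal r < lebesgue V) (x : X) :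
    ∃ i, closedBall x r ⊆ V i := by
  obtain ⟨i, hi⟩ := lt_iSup_iff.mp (hV.trans_le (iInf_le _ x))
  refine ⟨i, fun y hy => not_not.mp fun hyV => hi.not_ge ?_⟩
  calc Metric.infEDist x (V i)ᶜ ≤ edist x y := Metric.infEDist_le_edist_of_mem hyV
    _ = ENNReal.ofReal (dist y x) := by rw [edist_dist, dist_comm]
    _ ≤ ENNReal.ofReal r := ENNReal.ofReal_le_ofReal (mem_closedBall.mp hy)

theorem nonempty_of_mem_fullSimplex {S : Type u} {p : ellOne S} (hp : p ∈ fullSimplex S) :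
    Nonempty S := by
  by_contra hS
  rw [not_nonempty_iff] at hS
  simpa using hp.2.2

theorem lsParacompact_of_isEmpty (X : Type u) [MetricSpace X] [IsEmpty X] : LSParacompact X :=
  fun _ _ _ _ _ _ _ _ => ⟨PUnit, ∅, isEmptyElim, ⟨Set.empty_subset _, fun _ hp => hp.elim⟩,
    isEmptyElim, isEmptyElim, ⟨0, fun _ x => isEmptyElim x⟩,
    fun _ => ⟨PUnit.unit, fun x => isEmptyElim x⟩⟩

theorem LSParacompact.exists_deltaPartitionOfUnity {X : Type u} [MetricSpace X]
    (hX : LSParacompact X) {δ : ℝ} (hδ : 0 < δ) :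
    ∃ (S : Type u) (K : Set (ellOne S)) (f : X → ellOne S),
      IsSimplicialComplex K ∧ IsDeltaPartitionOfUnity δ K f := by
  obtain ⟨S, K, f, hK, hfK, hf, hV, hUV⟩ :=
    hX X (fun x => closedBall x (1 / δ)) (fun x => ⟨x, mem_closedBall_self (by positivity)⟩)
      (uniformlyBounded_closedBall _) δ δ hδ hδ
  exact ⟨S, K, f, hK, hfK, hf, hV, ofReal_le_lebesgue_of_closedBall_subset hUV⟩

theorem lsParacompact_of_forall_deltaPartitionOfUnity {X : Type u} [MetricSpace X] [Nonempty X]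
    (hX : ∀ δ : ℝ, 0 < δ → ∃ (S : Type u) (K : Set (ellOne S)) (f : X → ellOne S),
      IsSimplicialComplex K ∧ IsDeltaPartitionOfUnity δ K f) :
    LSParacompact X := by
  intro ι U _ hU l C hl hC
  obtain ⟨M, hM⟩ := hU.exists_subset_closedBall
  set δ := min (min l C) (1 / (|M| + 1))
  have hδ : 0 < δ := lt_min (lt_min hl hC) (by positivity)
  obtain ⟨S, K, f, hK, hfK, hf, hV, hleb⟩ := hX δ hδ
  have hMδ : M < 1 / δ :=
    calc M < |M| + 1 := by linarith [le_abs_self M]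
      _ ≤ 1 / δ := (le_one_div (by positivity) hδ).mpr (min_le_right _ _)
  have : Nonempty S := nonempty_of_mem_fullSimplex (hK.1 (hfK (Classical.arbitrary X)))
  have hδl : δ ≤ l := (min_le_left _ _).trans (min_le_left _ _)
  have hδC : δ ≤ C := (min_le_left _ _).trans (min_le_right _ _)
  refine ⟨S, K, f, hK, hfK, hf.mono hδl hδC, hV, fun i => ?_⟩
  rcases (U i).eq_empty_or_nonempty with hUi | ⟨x, hx⟩
  · exact ⟨Classical.arbitrary S, hUi ▸ Set.empty_subset _⟩
  · obtain ⟨v, hv⟩ := exists_closedBall_subset_of_ofReal_lt_lebesgue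
      (((ENNReal.ofReal_lt_ofReal_iff (one_div_pos.mpr hδ)).mpr hMδ).trans_le hleb) x
    exact ⟨v, (hM i x hx).trans hv⟩

/-- A metric space `X` is large scale paracompact iff for each `δ > 0`
there exist a set `S`, a simplicial complex `K ⊆ Δ(S)`, and a `δ`-partition of unity
`f : X → K`. -/
theorem lsParacompact_iff_deltaPartitions (X : Type u) [MetricSpace X] :
    LSParacompact X ↔
      ∀ δ : ℝ, 0 < δ → ∃ (S : Type u) (K : Set (ellOne S)) (f : X → ellOne S),
        IsSimplicialComplex K ∧ IsDeltaPartitionOfUnity δ K f := by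
  refine ⟨fun hX _ hδ => hX.exists_deltaPartitionOfUnity hδ, fun hX => ?_⟩
  cases isEmpty_or_nonempty X
  · exact lsParacompact_of_isEmpty X
  · exact lsParacompact_of_forall_deltaPartitionOfUnity hX

end
end

section
/- Let n ≥ 0 and let X be a metric space of asymptotic dimension at most n. Then for every ε > 0 there exists δ > 0 such that: for every set S, every simplicial complex K ⊆ Δ(S), every subset A ⊆ X, and every δ-partition of unity f: X → K with f(A) ⊆ K^(n), there exists a map h: X → K^(n) which agrees with f on A, satisfies supp(h(x)) ⊆ supp(f(x)) for all x ∈ X, and is an ε-partition of unity. -/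
/-!
Take a cover `U` of `X` of multiplicity `≤ n + 1` with a large Lebesgue number. As the stars of
`f` have Lebesgue number `≥ 1/δ`, each `Uᵢ` lies in the star of some vertex `vᵢ`. Normalizing the
bumps `max (d(x, X ∖ Uᵢ) - T) 0` and pushing them forward along `i ↦ vᵢ` gives a Lipschitz map
`g : X → K^(n)` with `supp g(x) ⊆ supp f(y)` whenever `d(x, y) ≤ T`.

Within distance `T` of `A`, pick `a(x) ∈ A` with `d(x, a(x)) < T` and let `r(x)` be `f(a(x))`
restricted to the face of `f(x)` and renormalized. As `‖f(x) - f(a(x))‖ = O(δT)`, the map `r` is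
Lipschitz up to an additive error `O(δT)`; moreover `r(x) ∈ K^(n)` because `f(a(x)) ∈ K^(n)`, and
`supp g(x) ⊆ supp r(x)`. The filler is `h = (1 - λ) r + λ g` with `λ(x) = min (d(x, A)) T / T`:
the support of `h(x)` is that of `r(x)` or of `g(x)`, so `h(x) ∈ K^(n)`, and it contains
`supp g(x)`, so the stars of `h` inherit the Lebesgue number of those of `g`.
-/

open Function Metric ENNReal

noncomputable section

theorem norm_inv_norm_smul_sub_le {E : Type*} [NormedAddCommGroup E] [NormedSpace ℝ E]
    {u : E} (hu : u ≠ 0) (v : E) : ‖‖u‖⁻¹ • u - ‖v‖⁻¹ • v‖ ≤ 2 * ‖u - v‖ / ‖u‖ := by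
  have hu' : 0 < ‖u‖ := norm_pos_iff.mpr hu
  have hsplit : ‖u‖⁻¹ • u - ‖v‖⁻¹ • v = ‖u‖⁻¹ • (u - v) + (‖u‖⁻¹ - ‖v‖⁻¹) • v := by
    rw [smul_sub, sub_smul]; abel
  have hscale : ‖(‖u‖⁻¹ - ‖v‖⁻¹) • v‖ ≤ ‖u - v‖ / ‖u‖ := by
    rcases eq_or_ne v 0 with rfl | hv
    · simpa using by positivity
    have hv' : 0 < ‖v‖ := norm_pos_iff.mpr hv
    rw [norm_smul, Real.norm_eq_abs, inv_sub_inv hu'.ne' hv'.ne', abs_div,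
      abs_of_pos (mul_pos hu' hv'), div_mul_eq_mul_div, mul_div_mul_right _ _ hv'.ne', abs_sub_comm]
    exact div_le_div_of_nonneg_right (abs_norm_sub_norm_le u v) hu'.le
  calc ‖‖u‖⁻¹ • u - ‖v‖⁻¹ • v‖
      ≤ ‖‖u‖⁻¹ • (u - v)‖ + ‖(‖u‖⁻¹ - ‖v‖⁻¹) • v‖ := hsplit ▸ norm_add_le _ _
    _ ≤ ‖u - v‖ / ‖u‖ + ‖u - v‖ / ‖u‖ := by
        gcongr
        rw [norm_smul, norm_inv, norm_norm, inv_mul_eq_div]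
    _ = 2 * ‖u - v‖ / ‖u‖ := by ring

namespace ellOne

variable {S ι : Type*}

theorem summable (p : ellOne S) : Summable p := (lp.memℓp p).summable_of_one

theorem summable_abs (p : ellOne S) : Summable fun s => |p s| := (summable p).abs

theorem norm_eq_tsum_abs (p : ellOne S) : ‖p‖ = ∑' s, |p s| := by
  simpa using lp.norm_eq_tsum_rpow (p := 1) (by norm_num) p

theorem norm_eq_tsum_of_nonneg {p : ellOne S} (hp : ∀ s, 0 ≤ p s) : ‖p‖ = ∑' s, p s := by
  simp only [norm_eq_tsum_abs, abs_of_nonneg (hp _)]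

theorem norm_eq_sum_abs (p : ellOne S) {F : Finset S} (hF : support p ⊆ F) :
    ‖p‖ = ∑ s ∈ F, |p s| :=
  (norm_eq_tsum_abs p).trans <| tsum_eq_sum fun s hs => by
    simpa using notMem_support.mp fun h => hs (hF h)

theorem memℓp_of_finite {c : S → ℝ} (hc : (support c).Finite) : Memℓp c 1 :=
  (memℓp_zero hc).of_exponent_ge bot_le

def ofFinite (c : S → ℝ) (hc : (support c).Finite) : ellOne S := ⟨c, memℓp_of_finite hc⟩

@[simp] theorem coe_ofFinite (c : S → ℝ) (hc : (support c).Finite) : ⇑(ofFinite c hc) = c := rfl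

theorem norm_sub_le_of_encard_le {p q : ellOne S} {m : ℕ} {c : ℝ} (hc : 0 ≤ c)
    (hp : (support p).encard ≤ m) (hq : (support q).encard ≤ m) (hpq : ∀ s, |p s - q s| ≤ c) :
    ‖p - q‖ ≤ 2 * m * c := by
  have hfin : (support p ∪ support q).Finite :=
    Set.finite_of_encard_le_coe ((Set.encard_union_le _ _).trans (add_le_add hp hq))
  have hsub : support ⇑(p - q) ⊆ hfin.toFinset := by
    intro s hs
    simpa using support_sub p q hs
  have hcard : (hfin.toFinset.card : ℝ) ≤ 2 * m := by
    have := (Set.encard_union_le _ _).trans (add_le_add hp hq)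
    rw [hfin.encard_eq_coe_toFinset_card, ← ENat.natCast_add, ENat.natCast_le_natCast] at this
    exact_mod_cast this.trans_eq (two_mul m).symm
  calc ‖p - q‖ = ∑ s ∈ hfin.toFinset, |p s - q s| := norm_eq_sum_abs (p - q) hsub
    _ ≤ ∑ _s ∈ hfin.toFinset, c := Finset.sum_le_sum fun s _ => hpq s
    _ ≤ 2 * m * c := by
        rw [Finset.sum_const, nsmul_eq_mul]
        exact mul_le_mul_of_nonneg_right hcard hc

theorem norm_eq_one_of_mem_fullSimplex {p : ellOne S} (hp : p ∈ fullSimplex S) : ‖p‖ = 1 :=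
  (norm_eq_tsum_of_nonneg hp.1).trans hp.2.2

theorem convex_fullSimplex : Convex ℝ (fullSimplex S) := by
  intro p hp q hq a b ha hb hab
  refine ⟨fun s => ?_, (hp.2.1.union hq.2.1).subset ?_, ?_⟩
  · simp only [lp.coeFn_add, lp.coeFn_smul, Pi.add_apply, Pi.smul_apply, smul_eq_mul]
    exact add_nonneg (mul_nonneg ha (hp.1 s)) (mul_nonneg hb (hq.1 s))
  · refine (support_add _ _).trans (Set.union_subset_union ?_ ?_) <;>
      exact support_const_smul_subset _ _
  · simp only [lp.coeFn_add, lp.coeFn_smul, Pi.add_apply, Pi.smul_apply, smul_eq_mul]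
    rw [((summable p).mul_left a).tsum_add ((summable q).mul_left b), tsum_mul_left,
      tsum_mul_left, hp.2.2, hq.2.2, mul_one, mul_one, hab]

theorem inv_norm_smul_mem_fullSimplex {p : ellOne S} (hp : ∀ s, 0 ≤ p s)
    (hfin : (support p).Finite) (h0 : p ≠ 0) : ‖p‖⁻¹ • p ∈ fullSimplex S := by
  have hpos : 0 < ‖p‖ := norm_pos_iff.mpr h0
  refine ⟨fun s => ?_, hfin.subset (support_const_smul_subset _ _), ?_⟩
  · simpa using mul_nonneg (inv_nonneg.mpr hpos.le) (hp s)
  · simp only [lp.coeFn_smul, Pi.smul_apply, smul_eq_mul]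
    rw [tsum_mul_left, ← norm_eq_tsum_of_nonneg hp, inv_mul_cancel₀ hpos.ne']

theorem support_smul_add_smul {p q : ellOne S} (hp : ∀ s, 0 ≤ p s) (hq : ∀ s, 0 ≤ q s)
    {a b : ℝ} (ha : 0 < a) (hb : 0 ≤ b) (hqp : support q ⊆ support p) :
    support ⇑(a • p + b • q) = support p := by
  ext s
  simp only [lp.coeFn_add, lp.coeFn_smul, Pi.add_apply, Pi.smul_apply, smul_eq_mul, mem_support]
  constructor
  · intro h hps
    have hqs : q s = 0 := notMem_support.mp fun hs => hqp hs hps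
    simp [hps, hqs] at h
  · intro hps
    have := mul_nonneg hb (hq s)
    have := mul_pos ha (lt_of_le_of_ne (hp s) (Ne.symm hps))
    linarith

theorem summable_fiber (p : ellOne ι) (v : ι → S) (w : S) :
    Summable fun i : v ⁻¹' {w} => p i :=
  (summable p).subtype _

theorem memℓp_push (p : ellOne ι) (v : ι → S) :
    Memℓp (fun w => ∑' i : v ⁻¹' {w}, p i) 1 := by
  refine Memℓp.mono (g := fun w => ∑' i : v ⁻¹' {w}, |p i|) (memℓp_gen ?_) fun w => ?_
  · refine ((summable_abs p).hasSum.tsum_fiberwise v).summable.congr fun w => ?_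
    rw [ENNReal.toReal_one, Real.rpow_one, Real.norm_of_nonneg (tsum_nonneg fun _ => abs_nonneg _)]
  · exact norm_tsum_le_tsum_norm (f := fun i : v ⁻¹' {w} => p i) ((summable_abs p).subtype _)

def push (v : ι → S) (p : ellOne ι) : ellOne S := ⟨_, memℓp_push p v⟩

theorem push_apply (v : ι → S) (p : ellOne ι) (w : S) :
    push v p w = ∑' i : v ⁻¹' {w}, p i := rfl

theorem push_sub (v : ι → S) (p q : ellOne ι) : push v (p - q) = push v p - push v q := by
  ext w
  simp only [push_apply, lp.coeFn_sub, Pi.sub_apply]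
  exact (summable_fiber p v w).tsum_sub (summable_fiber q v w)

theorem norm_push_le (v : ι → S) (p : ellOne ι) : ‖push v p‖ ≤ ‖p‖ := by
  have hfib : HasSum (fun w => ∑' i : v ⁻¹' {w}, |p i|) ‖p‖ := by
    rw [norm_eq_tsum_abs]
    exact (summable_abs p).hasSum.tsum_fiberwise v
  rw [norm_eq_tsum_abs, ← hfib.tsum_eq]
  exact (summable_abs (push v p)).tsum_le_tsum
    (fun w => norm_tsum_le_tsum_norm (f := fun i : v ⁻¹' {w} => p i) ((summable_abs p).subtype _))
    hfib.summable

theorem dist_push_le (v : ι → S) (p q : ellOne ι) : dist (push v p) (push v q) ≤ dist p q := by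
  simpa [dist_eq_norm, ← push_sub] using norm_push_le v (p - q)

theorem support_push_subset (v : ι → S) (p : ellOne ι) : support (push v p) ⊆ v '' support p := by
  intro w hw
  by_contra hvw
  refine hw ((tsum_congr fun i => ?_).trans tsum_zero)
  exact notMem_support.mp fun hi => hvw ⟨i, hi, i.2⟩

theorem support_push_of_nonneg (v : ι → S) {p : ellOne ι} (hp : ∀ i, 0 ≤ p i) :
    support (push v p) = v '' support p := by
  refine (support_push_subset v p).antisymm ?_
  rintro _ ⟨i, hi, rfl⟩
  exact ((summable_fiber p v (v i)).tsum_pos (fun j => hp j) ⟨i, rfl⟩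
    (lt_of_le_of_ne (hp i) (Ne.symm hi))).ne'

theorem push_mem_fullSimplex (v : ι → S) {p : ellOne ι} (hp : p ∈ fullSimplex ι) :
    push v p ∈ fullSimplex S :=
  ⟨fun _ => tsum_nonneg fun i => hp.1 i, (hp.2.1.image v).subset (support_push_subset v p),
    ((summable p).hasSum.tsum_fiberwise v).tsum_eq.trans hp.2.2⟩

def restrict (p : ellOne S) (s : Set S) : ellOne S :=
  ⟨s.indicator p, (lp.memℓp p).mono' fun i => norm_indicator_le_norm_self _ i⟩

@[simp] theorem coe_restrict (p : ellOne S) (s : Set S) : ⇑(restrict p s) = s.indicator p := rfl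

theorem restrict_support_self (p : ellOne S) : restrict p (support p) = p :=
  lp.ext (Set.indicator_support)

theorem norm_restrict_support_sub_le (p q : ellOne S) :
    ‖restrict q (support p) - q‖ ≤ ‖p - q‖ := by
  refine lp.norm_mono one_ne_zero fun s => ?_
  simp only [lp.coeFn_sub, Pi.sub_apply, coe_restrict, Real.norm_eq_abs]
  by_cases hs : p s = 0
  · simp [hs]
  · simp [Set.indicator_of_mem (mem_support.mpr hs)]

theorem pos_iff_mem_support {p : ellOne S} (hp : p ∈ fullSimplex S) {w : S} :
    0 < p w ↔ w ∈ support p :=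
  ⟨fun h => h.ne', fun h => lt_of_le_of_ne (hp.1 w) (Ne.symm h)⟩

def retract (p q : ellOne S) : ellOne S := ‖restrict q (support p)‖⁻¹ • restrict q (support p)

theorem norm_retract_le (p q : ellOne S) : ‖retract p q‖ ≤ 1 := by
  rcases eq_or_ne (restrict q (support p)) 0 with h | h
  · simp [retract, h]
  · exact (norm_smul_inv_norm h).le

theorem retract_self {p : ellOne S} (hp : p ∈ fullSimplex S) : retract p p = p := by
  simp [retract, restrict_support_self, norm_eq_one_of_mem_fullSimplex hp]

theorem one_sub_le_norm_restrict (p : ellOne S) {q : ellOne S} (hq : q ∈ fullSimplex S) :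
    1 - ‖p - q‖ ≤ ‖restrict q (support p)‖ := by
  have := norm_sub_norm_le q (restrict q (support p))
  rw [norm_sub_rev, norm_eq_one_of_mem_fullSimplex hq] at this
  linarith [norm_restrict_support_sub_le p q]

theorem retract_mem_fullSimplex {p q : ellOne S} (hp : p ∈ fullSimplex S) (hq : q ∈ fullSimplex S)
    (hpq : ‖p - q‖ < 1) : retract p q ∈ fullSimplex S := by
  refine inv_norm_smul_mem_fullSimplex (fun s => ?_) (hp.2.1.subset ?_) ?_
  · exact Set.indicator_nonneg (fun s _ => hq.1 s) s
  · exact Set.support_indicator_subset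
  · exact norm_pos_iff.mp ((sub_pos.mpr hpq).trans_le (one_sub_le_norm_restrict p hq))

theorem support_retract {p q : ellOne S} (hq : q ∈ fullSimplex S) (hpq : ‖p - q‖ < 1) :
    support (retract p q) = support p ∩ support q := by
  have h0 : ‖restrict q (support p)‖⁻¹ ≠ 0 :=
    inv_ne_zero ((sub_pos.mpr hpq).trans_le (one_sub_le_norm_restrict p hq)).ne'
  rw [retract, lp.coeFn_smul, support_const_smul_of_ne_zero _ _ h0, coe_restrict,
    Set.support_indicator]

theorem dist_retract_le {p q : ellOne S} (hq : q ∈ fullSimplex S) (hpq : ‖p - q‖ ≤ 1 / 2)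
    (p' q' : ellOne S) :
    dist (retract p q) (retract p' q') ≤ 4 * (‖p - q‖ + ‖q - q'‖ + ‖p' - q'‖) := by
  set u := restrict q (support p)
  set u' := restrict q' (support p')
  have hu : 1 / 2 ≤ ‖u‖ := by linarith [one_sub_le_norm_restrict p hq]
  have huu' : ‖u - u'‖ ≤ ‖p - q‖ + ‖q - q'‖ + ‖p' - q'‖ := by
    calc ‖u - u'‖ = ‖(u - q) + (q - q') - (u' - q')‖ := by congr 1; abel
      _ ≤ ‖u - q‖ + ‖q - q'‖ + ‖u' - q'‖ := norm_sub_le_of_le (norm_add_le _ _) le_rfl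
      _ ≤ _ := by
        gcongr
        · exact norm_restrict_support_sub_le p q
        · exact norm_restrict_support_sub_le p' q'
  calc dist (retract p q) (retract p' q') ≤ 2 * ‖u - u'‖ / ‖u‖ :=
        (dist_eq_norm _ _).trans_le (norm_inv_norm_smul_sub_le (norm_pos_iff.mp (by linarith)) _)
    _ ≤ 2 * ‖u - u'‖ / (1 / 2) := by gcongr
    _ ≤ 4 * (‖p - q‖ + ‖q - q'‖ + ‖p' - q'‖) := by linarith

end ellOne

section TruncInfDist

variable {X : Type*} [PseudoMetricSpace X]

/-- `min (d(x, C)) t`, where the distance to `∅` is `∞` (whereas `Metric.infDist x ∅ = 0`). -/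
def truncInfDist (C : Set X) (t : ℝ) (x : X) : ℝ := (min (infEDist x C) (ENNReal.ofReal t)).toReal

variable {C : Set X} {t : ℝ} {x y : X}

theorem truncInfDist_nonneg : 0 ≤ truncInfDist C t x := ENNReal.toReal_nonneg

theorem truncInfDist_le (ht : 0 ≤ t) : truncInfDist C t x ≤ t :=
  (ENNReal.toReal_le_of_le_ofReal ht (min_le_right _ _))

theorem truncInfDist_le_add_dist : truncInfDist C t x ≤ truncInfDist C t y + dist x y := by
  have h : min (infEDist x C) (ENNReal.ofReal t)
      ≤ min (infEDist y C) (ENNReal.ofReal t) + ENNReal.ofReal (dist x y) := by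
    rw [← min_add_add_right, ← edist_dist]
    exact min_le_min infEDist_le_infEDist_add_edist le_self_add
  have hne : min (infEDist y C) (ENNReal.ofReal t) ≠ ⊤ :=
    ne_top_of_le_ne_top ENNReal.ofReal_ne_top (min_le_right _ _)
  simpa [truncInfDist, ENNReal.toReal_add hne ENNReal.ofReal_ne_top, dist_nonneg] using
    ENNReal.toReal_mono (by finiteness) h

theorem abs_truncInfDist_sub_le : |truncInfDist C t x - truncInfDist C t y| ≤ dist x y :=
  abs_sub_le_iff.mpr ⟨by linarith [truncInfDist_le_add_dist (C := C) (t := t) (x := x) (y := y)],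
    by linarith [truncInfDist_le_add_dist (C := C) (t := t) (x := y) (y := x), dist_comm x y]⟩

theorem truncInfDist_eq_zero_of_mem (hx : x ∈ C) : truncInfDist C t x = 0 := by
  simp [truncInfDist, infEDist_zero_of_mem hx]

theorem truncInfDist_eq_of_le_infEDist (ht : 0 ≤ t) (h : ENNReal.ofReal t ≤ infEDist x C) :
    truncInfDist C t x = t := by
  simp [truncInfDist, min_eq_right h, ht]

theorem notMem_of_lt_truncInfDist {s : ℝ} (h : s < truncInfDist C t x) (hy : dist x y ≤ s) :
    y ∉ C := by
  intro hyC
  have : min (infEDist x C) (ENNReal.ofReal t) ≤ ENNReal.ofReal s :=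
    (min_le_left _ _).trans ((infEDist_le_edist_of_mem hyC).trans
      (edist_dist x y ▸ ENNReal.ofReal_le_ofReal hy))
  exact (ENNReal.toReal_le_of_le_ofReal (dist_nonneg.trans hy) this).not_gt h

theorem infEDist_pos_of_truncInfDist_pos (h : 0 < truncInfDist C t x) : 0 < infEDist x C :=
  pos_iff_ne_zero.mpr fun h0 => h.ne' (by simp [truncInfDist, h0])

theorem infEDist_lt_of_truncInfDist_lt (ht : 0 ≤ t) (h : truncInfDist C t x < t) :
    infEDist x C < ENNReal.ofReal t :=
  not_le.mp fun hle => h.ne (truncInfDist_eq_of_le_infEDist ht hle)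

end TruncInfDist

section Lebesgue

variable {X ι : Type*} [MetricSpace X]

theorem lebesgue_eq_iInf_iSup (U : ι → Set X) :
    lebesgue U = ⨅ x, ⨆ i, infEDist x (U i)ᶜ := rfl

theorem exists_lt_infEDist_compl_of_lt_lebesgue {U : ι → Set X} {c : ℝ≥0∞} (h : c < lebesgue U)
    (x : X) : ∃ i, c < infEDist x (U i)ᶜ :=
  lt_iSup_iff.mp (h.trans_le (iInf_le _ x))

theorem closedBall_subset_of_lt_infEDist_compl {C : Set X} {x : X} {r : ℝ}
    (h : ENNReal.ofReal r < infEDist x Cᶜ) : closedBall x r ⊆ C := by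
  intro y hy
  by_contra hyC
  refine (infEDist_le_edist_of_mem hyC).not_gt (h.trans_le' ?_)
  rw [edist_dist]
  exact ENNReal.ofReal_le_ofReal (mem_closedBall'.mp hy)

theorem exists_subset_of_lt_lebesgue {V : ι → Set X} {U : Set X} (hU : U.Nonempty) {B : ℝ}
    (hUB : ∀ x ∈ U, ∀ y ∈ U, dist x y ≤ B) (hB : ENNReal.ofReal B < lebesgue V) :
    ∃ i, U ⊆ V i := by
  obtain ⟨x, hx⟩ := hU
  obtain ⟨i, hi⟩ := exists_lt_infEDist_compl_of_lt_lebesgue hB x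
  exact ⟨i, fun y hy => closedBall_subset_of_lt_infEDist_compl hi (by
    rw [mem_closedBall, dist_comm]; exact hUB x hx y hy)⟩

theorem ofReal_le_lebesgue {V : ι → Set X} {r : ℝ} (h : ∀ x, ∃ i, ball x r ⊆ V i) :
    ENNReal.ofReal r ≤ lebesgue V := by
  refine le_iInf fun x => ?_
  obtain ⟨i, hi⟩ := h x
  refine le_iSup_of_le i (le_infEDist.mpr fun y hy => ?_)
  rw [edist_dist]
  exact ENNReal.ofReal_le_ofReal (not_lt.mp fun hxy => hy (hi (mem_ball'.mpr hxy)))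

theorem lebesgue_subtype_nonempty (U : ι → Set X) :
    lebesgue (fun i : {i // (U i).Nonempty} => U i) = lebesgue U := by
  simp only [lebesgue_eq_iInf_iSup]
  refine iInf_congr fun x => le_antisymm (iSup_le fun i => le_iSup_of_le i.1 le_rfl) ?_
  refine iSup_le fun i => ?_
  rcases (U i).eq_empty_or_nonempty with hi | hi
  · simp [hi, infEDist_zero_of_mem (Set.mem_univ x)]
  · exact le_iSup_of_le ⟨i, hi⟩ le_rfl

end Lebesgue

/-- `MultiplicityLE` is phrased with `Metric.infDist`, which vanishes at `∅`: a member equal to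
the whole space is not counted. Such a cover is replaced by the single set `univ`. -/
theorem AsdimLE.exists_cover {X : Type u} [MetricSpace X] {n : ℕ} (hX : AsdimLE X n) {R : ℝ}
    (hR : 0 < R) : ∃ (ι : Type u) (U : ι → Set X), (∀ i, (U i).Nonempty) ∧ UniformlyBounded U ∧
      (∀ x, {i | 0 < infEDist x (U i)ᶜ}.encard ≤ n + 1) ∧ ENNReal.ofReal R ≤ lebesgue U := by
  suffices h : ∃ (ι : Type u) (U : ι → Set X), UniformlyBounded U ∧
      (∀ x, {i | 0 < infEDist x (U i)ᶜ}.encard ≤ n + 1) ∧ ENNReal.ofReal R ≤ lebesgue U by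
    obtain ⟨ι, U, ⟨B, hB⟩, hmult, hleb⟩ := h
    refine ⟨{i // (U i).Nonempty}, fun i => U i, fun i => i.2, ⟨B, fun i => hB i⟩,
      fun x => ?_, (lebesgue_subtype_nonempty U).symm ▸ hleb⟩
    refine le_trans ?_ (hmult x)
    rw [← Subtype.val_injective.encard_image]
    exact Set.encard_mono (by rintro _ ⟨i, hi, rfl⟩; exact hi)
  obtain ⟨ι, U, -, ⟨B, hB⟩, hmult, hleb⟩ := hX R hR
  by_cases huniv : ∃ i, U i = Set.univ
  · obtain ⟨i, hi⟩ := huniv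
    refine ⟨PUnit, fun _ => Set.univ, ⟨B, fun _ => hi ▸ hB i⟩, fun x => ?_,
      by simp [lebesgue_eq_iInf_iSup]⟩
    exact Set.encard_le_card.trans (by simp)
  · push Not at huniv
    refine ⟨ι, U, ⟨B, hB⟩, fun x => (Set.encard_mono fun i hi => ?_).trans (hmult x), hleb⟩
    exact ENNReal.toReal_pos hi.ne' (infEDist_ne_top (Set.nonempty_compl.mpr (huniv i)))

theorem exists_nerveMap {X ι S : Type*} [PseudoMetricSpace X] (Ψ : ι → X → ℝ) (v : ι → S) {m : ℕ}
    {L : ℝ} (hL : 0 < L) (hΨ0 : ∀ i x, 0 ≤ Ψ i x) (hΨlip : ∀ i x y, |Ψ i x - Ψ i y| ≤ dist x y)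
    (hΨcard : ∀ x, (support fun i => Ψ i x).encard ≤ m) (hΨdeep : ∀ x, ∃ i, L ≤ Ψ i x) :
    ∃ g : X → ellOne S, (∀ x, g x ∈ fullSimplex S) ∧
      (∀ x, support (g x) = v '' support fun i => Ψ i x) ∧
      ∀ x y, dist (g x) (g y) ≤ 4 * m / L * dist x y := by
  have hfin : ∀ x, (support fun i => Ψ i x).Finite := fun x =>
    Set.finite_of_encard_le_coe (hΨcard x)
  set u : X → ellOne ι := fun x => ellOne.ofFinite _ (hfin x) with hu
  have hnorm : ∀ x, L ≤ ‖u x‖ := fun x => by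
    obtain ⟨i, hi⟩ := hΨdeep x
    calc L ≤ ‖u x i‖ := by simpa [hu, abs_of_nonneg (hΨ0 i x)] using hi
      _ ≤ ‖u x‖ := lp.norm_apply_le_norm one_ne_zero _ i
  have hu0 : ∀ x, u x ≠ 0 := fun x => norm_pos_iff.mp (hL.trans_le (hnorm x))
  refine ⟨fun x => ellOne.push v (‖u x‖⁻¹ • u x), fun x => ?_, fun x => ?_, fun x y => ?_⟩
  · exact ellOne.push_mem_fullSimplex v
      (ellOne.inv_norm_smul_mem_fullSimplex (fun i => hΨ0 i x) (hfin x) (hu0 x))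
  · rw [ellOne.support_push_of_nonneg, lp.coeFn_smul,
      support_const_smul_of_ne_zero _ _ (inv_ne_zero (norm_ne_zero_iff.mpr (hu0 x)))]
    · rfl
    · intro i
      simpa [hu] using mul_nonneg (inv_nonneg.mpr (norm_nonneg (u x))) (hΨ0 i x)
  · calc dist (ellOne.push v (‖u x‖⁻¹ • u x)) (ellOne.push v (‖u y‖⁻¹ • u y))
        ≤ ‖‖u x‖⁻¹ • u x - ‖u y‖⁻¹ • u y‖ := by
          rw [← dist_eq_norm]; exact ellOne.dist_push_le v _ _
      _ ≤ 2 * ‖u x - u y‖ / ‖u x‖ := norm_inv_norm_smul_sub_le (hu0 x) _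
      _ ≤ 2 * (2 * m * dist x y) / L := by
          have hxy : ‖u x - u y‖ ≤ 2 * m * dist x y :=
            ellOne.norm_sub_le_of_encard_le (p := u x) (q := u y) dist_nonneg (hΨcard x)
              (hΨcard y) fun i => hΨlip i x y
          have := hnorm x
          gcongr
      _ = 4 * m / L * dist x y := by ring

theorem exists_nerveMap_of_cover {X ι S : Type*} [MetricSpace X] {U : ι → Set X}
    {V : S → Set X} (v : ι → S) (hv : ∀ i, U i ⊆ V (v i)) {m : ℕ}
    (hmult : ∀ x, {i | 0 < infEDist x (U i)ᶜ}.encard ≤ m) {L T : ℝ} (hL : 0 < L) (hT : 0 ≤ T)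
    (hleb : ENNReal.ofReal (L + T) < lebesgue U) :
    ∃ g : X → ellOne S, (∀ x, g x ∈ fullSimplex S) ∧ (∀ x, (support (g x)).encard ≤ m) ∧
      (∀ x y, dist (g x) (g y) ≤ 4 * m / L * dist x y) ∧
      (∀ x y, dist x y ≤ T → ∀ w ∈ support (g x), y ∈ V w) ∧
      ∀ x, ∃ w, ∀ z, dist x z < L → w ∈ support (g z) := by
  set Ψ : ι → X → ℝ := fun i x => max (truncInfDist (U i)ᶜ (L + T) x - T) 0 with hΨ
  have hΨpos : ∀ {i x}, Ψ i x ≠ 0 → T < truncInfDist (U i)ᶜ (L + T) x := fun h => by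
    by_contra hle
    exact h (max_eq_right (by linarith))
  have hΨlip : ∀ i x y, |Ψ i x - Ψ i y| ≤ dist x y := fun i x y =>
    (abs_max_sub_max_le_abs _ _ _).trans (by simpa using abs_truncInfDist_sub_le)
  have hΨdeep : ∀ x, ∃ i, Ψ i x = L := fun x => by
    obtain ⟨i, hi⟩ := exists_lt_infEDist_compl_of_lt_lebesgue hleb x
    refine ⟨i, ?_⟩
    rw [hΨ]; dsimp only
    rw [truncInfDist_eq_of_le_infEDist (by linarith) hi.le, add_sub_cancel_right, max_eq_left hL.le]
  have hΨcard : ∀ x, (support fun i => Ψ i x).encard ≤ m := fun x =>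
    (Set.encard_mono fun i hi =>
      infEDist_pos_of_truncInfDist_pos (hT.trans_lt (hΨpos hi))).trans (hmult x)
  obtain ⟨g, hgΔ, hgsupp, hglip⟩ := exists_nerveMap Ψ v hL (fun i x => le_max_right _ _) hΨlip
    hΨcard fun x => (hΨdeep x).imp fun i hi => hi.ge
  refine ⟨g, hgΔ, fun x => ?_, hglip, fun x y hxy w hw => ?_, fun x => ?_⟩
  · exact hgsupp x ▸ (Set.encard_image_le v _).trans (hΨcard x)
  · rw [hgsupp] at hw
    obtain ⟨i, hi, rfl⟩ := hw
    exact hv i (not_not.mp (notMem_of_lt_truncInfDist (hΨpos hi) hxy))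
  · obtain ⟨i, hi⟩ := hΨdeep x
    refine ⟨v i, fun z hz => hgsupp z ▸ ⟨i, ?_, rfl⟩⟩
    have := hΨlip i x z
    rw [abs_le] at this
    exact (show 0 < Ψ i z by linarith).ne'

section Interpolation

variable {E : Type*} [SeminormedAddCommGroup E] [NormedSpace ℝ E]

theorem norm_smul_le_of_mem_Icc {t : ℝ} (ht : t ∈ Set.Icc 0 1) (e : E) : ‖t • e‖ ≤ ‖e‖ := by
  rw [norm_smul, Real.norm_of_nonneg ht.1]
  exact mul_le_of_le_one_left (norm_nonneg e) ht.2

theorem norm_interpolate_sub_le {s t : ℝ} (hs : s ∈ Set.Icc 0 1) {p q p' q' : E}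
    (hp' : ‖p'‖ ≤ 1) (hq' : ‖q'‖ ≤ 1) :
    ‖((1 - s) • p + s • q) - ((1 - t) • p' + t • q')‖ ≤ ‖p - p'‖ + ‖q - q'‖ + 2 * |s - t| := by
  have hsplit : ((1 - s) • p + s • q) - ((1 - t) • p' + t • q')
      = (1 - s) • (p - p') + s • (q - q') + (s - t) • (q' - p') := by module
  have h1s : 1 - s ∈ Set.Icc (0 : ℝ) 1 := ⟨sub_nonneg.mpr hs.2, by linarith [hs.1]⟩
  have h3 : ‖(s - t) • (q' - p')‖ ≤ 2 * |s - t| := by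
    rw [norm_smul, Real.norm_eq_abs, mul_comm]
    exact mul_le_mul_of_nonneg_right ((norm_sub_le _ _).trans (by linarith)) (abs_nonneg _)
  rw [hsplit]
  linarith [norm_add₃_le (a := (1 - s) • (p - p')) (b := s • (q - q')) (c := (s - t) • (q' - p')),
    norm_smul_le_of_mem_Icc h1s (p - p'), norm_smul_le_of_mem_Icc hs (q - q')]

theorem norm_interpolate_sub_le_of_eq_one {s t : ℝ} (hs : s ∈ Set.Icc 0 1) (ht : t = 1)
    {p q p' q' : E} (hp : ‖p‖ ≤ 1) (hq' : ‖q'‖ ≤ 1) :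
    ‖((1 - s) • p + s • q) - ((1 - t) • p' + t • q')‖ ≤ 2 * |s - t| + ‖q - q'‖ := by
  subst ht
  have hsplit : ((1 - s) • p + s • q) - ((1 - 1 : ℝ) • p' + (1 : ℝ) • q')
      = (1 - s) • (p - q') + s • (q - q') := by module
  have h1 : ‖(1 - s) • (p - q')‖ ≤ 2 * |s - 1| := by
    rw [norm_smul, Real.norm_eq_abs, abs_sub_comm, mul_comm]
    exact mul_le_mul_of_nonneg_right ((norm_sub_le _ _).trans (by linarith)) (abs_nonneg _)
  rw [hsplit]
  linarith [norm_add_le ((1 - s) • (p - q')) (s • (q - q')), norm_smul_le_of_mem_Icc hs (q - q')]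

theorem norm_interpolate_sub_le_of_lipschitz {X : Type*} [PseudoMetricSpace X] {lam : X → ℝ}
    {r g : X → E} {a b c K : ℝ} (ha : 0 ≤ a) (hc : 0 ≤ c) (hlam : ∀ x, lam x ∈ Set.Icc 0 1)
    (hlamlip : ∀ x y, |lam x - lam y| ≤ K * dist x y) (hr : ∀ x, ‖r x‖ ≤ 1) (hg : ∀ x, ‖g x‖ ≤ 1)
    (hglip : ∀ x y, ‖g x - g y‖ ≤ b * dist x y)
    (hrlip : ∀ x y, lam x < 1 → lam y < 1 → ‖r x - r y‖ ≤ a * dist x y + c) (x y : X) :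
    ‖((1 - lam x) • r x + lam x • g x) - ((1 - lam y) • r y + lam y • g y)‖ ≤
      (a + b + 2 * K) * dist x y + c := by
  have had : 0 ≤ a * dist x y := mul_nonneg ha dist_nonneg
  have hexp : (a + b + 2 * K) * dist x y = a * dist x y + b * dist x y + 2 * (K * dist x y) := by
    ring
  rw [hexp]
  rcases (hlam x).2.lt_or_eq with hx | hx <;> rcases (hlam y).2.lt_or_eq with hy | hy
  · linarith [norm_interpolate_sub_le (t := lam y) (hlam x) (p := r x) (q := g x) (hr y) (hg y),
      hrlip x y hx hy, hglip x y, hlamlip x y]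
  · linarith [norm_interpolate_sub_le_of_eq_one (hlam x) hy (q := g x) (p' := r y) (hr x) (hg y),
      hglip x y, hlamlip x y]
  all_goals
    rw [norm_sub_rev]
    linarith [norm_interpolate_sub_le_of_eq_one (hlam y) hx (q := g y) (p' := r x) (hr y) (hg x),
      hglip x y, hlamlip x y, norm_sub_rev (g x) (g y), abs_sub_comm (lam x) (lam y)]

end Interpolation

theorem exists_collar {X : Type*} [MetricSpace X] (A : Set X) {T : ℝ} (hT : 0 < T) :
    ∃ (lam : X → ℝ) (a : X → X), (∀ x, lam x ∈ Set.Icc 0 1) ∧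
      (∀ x y, |lam x - lam y| ≤ T⁻¹ * dist x y) ∧ (∀ x ∈ A, lam x = 0 ∧ a x = x) ∧
      ∀ x, lam x < 1 → a x ∈ A ∧ dist x (a x) < T := by
  have hpt : ∀ x, ∃ y, (x ∈ A → y = x) ∧
      (infEDist x A < ENNReal.ofReal T → y ∈ A ∧ dist x y < T) := by
    intro x
    by_cases hx : x ∈ A
    · exact ⟨x, fun _ => rfl, fun _ => ⟨hx, by simpa using hT⟩⟩
    by_cases hxA : infEDist x A < ENNReal.ofReal T
    · obtain ⟨y, hy, hxy⟩ := infEDist_lt_iff.mp hxA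
      exact ⟨y, fun h => absurd h hx, fun _ => ⟨hy, edist_lt_ofReal.mp hxy⟩⟩
    · exact ⟨x, fun _ => rfl, fun h => absurd h hxA⟩
  choose a haA haT using hpt
  refine ⟨fun x => T⁻¹ * truncInfDist A T x, a, fun x => ⟨?_, ?_⟩, fun x y => ?_,
    fun x hx => ⟨?_, haA x hx⟩, fun x hx => haT x ?_⟩
  · exact mul_nonneg (inv_nonneg.mpr hT.le) truncInfDist_nonneg
  · exact inv_mul_le_one_of_le₀ (truncInfDist_le hT.le) hT.le
  · rw [← mul_sub, abs_mul, abs_of_pos (inv_pos.mpr hT)]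
    exact mul_le_mul_of_nonneg_left abs_truncInfDist_sub_le (inv_nonneg.mpr hT.le)
  · simp [truncInfDist_eq_zero_of_mem hx]
  · refine infEDist_lt_of_truncInfDist_lt hT.le ?_
    rwa [inv_mul_lt_one₀ hT] at hx

theorem IsLipschitzLC.dist_le_of_dist_lt {X Y : Type*} [MetricSpace X] [MetricSpace Y]
    {f : X → Y} {δ T : ℝ} (hf : IsLipschitzLC δ δ f) (hδ : 0 ≤ δ) {x y : X} (h : dist x y < T) :
    dist (f x) (f y) ≤ δ * (T + 1) := by
  nlinarith [hf x y]

theorem dist_retract_le_of_isLipschitzLC {X S : Type*} [MetricSpace X] {f : X → ellOne S}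
    {δ T : ℝ} (hfΔ : ∀ x, f x ∈ fullSimplex S) (hf : IsLipschitzLC δ δ f) (hδ : 0 ≤ δ)
    (hδT : δ * (T + 1) ≤ 1 / 2) {x y x' y' : X} (hx : dist x x' < T) (hy : dist y y' < T) :
    dist (ellOne.retract (f x) (f x')) (ellOne.retract (f y) (f y')) ≤
      4 * δ * dist x y + 4 * δ * (4 * T + 3) := by
  have hfx := dist_eq_norm (f x) (f x') ▸ hf.dist_le_of_dist_lt hδ hx
  have hfy := dist_eq_norm (f y) (f y') ▸ hf.dist_le_of_dist_lt hδ hy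
  have hx'y' : dist x' y' ≤ dist x y + 2 * T := by
    linarith [dist_triangle4 x' x y y', dist_comm x x']
  have hf' : ‖f x' - f y'‖ ≤ δ * (dist x y + 2 * T) + δ := by
    rw [← dist_eq_norm]
    exact (hf _ _).trans (by gcongr)
  refine (ellOne.dist_retract_le (hfΔ x') (hfx.trans hδT) _ _).trans ?_
  nlinarith

theorem isDeltaPartitionOfUnity_of_support_subset {X S : Type*} [MetricSpace X]
    {K : Set (ellOne S)} (hK : IsSimplicialComplex K) {δ ε : ℝ} {f h : X → ellOne S}
    (hf : IsDeltaPartitionOfUnity δ K f) (hh : ∀ x, h x ∈ fullSimplex S)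
    (hhf : ∀ x, support (h x) ⊆ support (f x)) (hlip : IsLipschitzLC ε ε h)
    (hleb : ∀ x, ∃ w, ∀ z, dist x z < 1 / ε → w ∈ support (h z)) :
    IsDeltaPartitionOfUnity ε K h := by
  obtain ⟨hfK, -, ⟨M, hM⟩, -⟩ := hf
  have hhK : ∀ x, h x ∈ K := fun x => hK.2 (f x) (hfK x) (h x) (hh x) (hhf x)
  have hstar : ∀ w, h ⁻¹' star K w ⊆ f ⁻¹' star K w := fun w x hx =>
    ⟨hfK x, (ellOne.pos_iff_mem_support (hK.1 (hfK x))).mpr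
      (hhf x ((ellOne.pos_iff_mem_support (hh x)).mp hx.2))⟩
  refine ⟨hhK, hlip, ⟨M, fun w x hx y hy => hM w x (hstar w hx) y (hstar w hy)⟩,
    ofReal_le_lebesgue fun x => ?_⟩
  obtain ⟨w, hw⟩ := hleb x
  exact ⟨w, fun z hz => ⟨hhK z, (ellOne.pos_iff_mem_support (hh z)).mpr (hw z (mem_ball'.mp hz))⟩⟩

theorem exists_filler {X S : Type*} [MetricSpace X] {K : Set (ellOne S)}
    (hK : IsSimplicialComplex K)
    {n : ℕ} {ε δ T b : ℝ} (hδ : 0 ≤ δ) (hT : 0 < T) (hδT : δ * (T + 1) ≤ 1 / 2)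
    (hεlip : 4 * δ + b + 2 * T⁻¹ ≤ ε) (hεconst : 4 * δ * (4 * T + 3) ≤ ε)
    {A : Set X} {f g : X → ellOne S} (hf : IsDeltaPartitionOfUnity δ K f)
    (hfA : ∀ a ∈ A, f a ∈ skeleton S n) (hg : ∀ x, g x ∈ skeleton S n)
    (hglip : ∀ x y, dist (g x) (g y) ≤ b * dist x y)
    (hgf : ∀ x y, dist x y ≤ T → support (g x) ⊆ support (f y))
    (hgleb : ∀ x, ∃ w, ∀ z, dist x z < 1 / ε → w ∈ support (g z)) :
    ∃ h : X → ellOne S, (∀ x, h x ∈ K ∩ skeleton S n) ∧ (∀ a ∈ A, h a = f a) ∧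
      (∀ x, support (h x) ⊆ support (f x)) ∧ IsDeltaPartitionOfUnity ε K h := by
  have hfΔ : ∀ x, f x ∈ fullSimplex S := fun x => hK.1 (hf.1 x)
  obtain ⟨lam, a, hlam, hlamlip, hA, hnear⟩ := exists_collar A hT
  set r : X → ellOne S := fun x => ellOne.retract (f x) (f (a x)) with hr
  set h : X → ellOne S := fun x => (1 - lam x) • r x + lam x • g x with hh
  have hfa : ∀ x, lam x < 1 → ‖f x - f (a x)‖ < 1 := fun x hx => by
    linarith [dist_eq_norm (f x) (f (a x)) ▸ hf.2.1.dist_le_of_dist_lt hδ (hnear x hx).2]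
  have hrsupp : ∀ x, lam x < 1 → support (r x) = support (f x) ∩ support (f (a x)) :=
    fun x hx => ellOne.support_retract (hfΔ (a x)) (hfa x hx)
  have hgr : ∀ x, lam x < 1 → support (g x) ⊆ support (r x) := fun x hx => by
    rw [hrsupp x hx]
    exact Set.subset_inter (hgf x x (by simp [hT.le])) (hgf x (a x) (hnear x hx).2.le)
  have hsupp : ∀ x, h x ∈ fullSimplex S ∧ support (g x) ⊆ support (h x) ∧
      support (h x) ⊆ support (f x) ∧ (support (h x)).encard ≤ n + 1 := by
    intro x
    rcases (hlam x).2.lt_or_eq with hx | hx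
    · have hrΔ := ellOne.retract_mem_fullSimplex (hfΔ x) (hfΔ (a x)) (hfa x hx)
      have hs : support (h x) = support (r x) :=
        ellOne.support_smul_add_smul hrΔ.1 (hg x).1.1 (sub_pos.mpr hx) (hlam x).1 (hgr x hx)
      refine ⟨ellOne.convex_fullSimplex hrΔ (hg x).1 (sub_nonneg.mpr (hlam x).2)
        (hlam x).1 (by ring), hs ▸ hgr x hx, ?_, ?_⟩ <;> rw [hs, hrsupp x hx]
      · exact Set.inter_subset_left
      · exact (Set.encard_mono Set.inter_subset_right).trans (hfA (a x) (hnear x hx).1).2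
    · rw [show h x = g x by simp [hh, hx]]
      exact ⟨(hg x).1, subset_rfl, hgf x x (by simp [hT.le]), (hg x).2⟩
  have hlip : IsLipschitzLC ε ε h := fun x y => by
    have hxy := norm_interpolate_sub_le_of_lipschitz (mul_nonneg (by norm_num) hδ) (by positivity)
      hlam hlamlip (fun x => ellOne.norm_retract_le _ _)
      (fun x => (ellOne.norm_eq_one_of_mem_fullSimplex (hg x).1).le)
      (fun x y => (dist_eq_norm _ _).symm.trans_le (hglip x y))
      (fun x y hx hy => (dist_eq_norm _ _).symm.trans_le <| dist_retract_le_of_isLipschitzLC hfΔ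
        hf.2.1 hδ hδT (hnear x hx).2 (hnear y hy).2) x y
    rw [dist_eq_norm]
    nlinarith [mul_le_mul_of_nonneg_right hεlip (dist_nonneg (x := x) (y := y))]
  refine ⟨h, fun x => ⟨hK.2 (f x) (hf.1 x) (h x) (hsupp x).1 (hsupp x).2.2.1, (hsupp x).1,
    (hsupp x).2.2.2⟩, fun x hx => ?_, fun x => (hsupp x).2.2.1,
    isDeltaPartitionOfUnity_of_support_subset hK hf (fun x => (hsupp x).1)
      (fun x => (hsupp x).2.2.1) hlip fun x => ?_⟩
  · simp [hh, hr, (hA x hx).1, (hA x hx).2, ellOne.retract_self (hfΔ x)]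
  · exact (hgleb x).imp fun w hw z hz => (hsupp z).2.1 (hw z hz)

theorem exists_small_delta {ε T B : ℝ} (hε : 0 < ε) (hT : 0 < T) :
    ∃ δ > 0, B < 1 / δ ∧ δ * (T + 1) ≤ 1 / 2 ∧ 4 * δ ≤ ε / 2 ∧ 4 * δ * (4 * T + 3) ≤ ε := by
  set δ := min (min (1 / (|B| + 1)) (1 / (2 * (T + 1)))) (ε / (16 * (T + 1)))
  have h₁ : δ ≤ 1 / (|B| + 1) := (min_le_left _ _).trans (min_le_left _ _)
  have h₂ : δ ≤ 1 / (2 * (T + 1)) := (min_le_left _ _).trans (min_le_right _ _)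
  have h₃ : δ ≤ ε / (16 * (T + 1)) := min_le_right _ _
  have hδ : 0 < δ := lt_min (lt_min (by positivity) (by positivity)) (by positivity)
  refine ⟨δ, hδ, ?_, ?_, ?_, ?_⟩
  · rw [le_div_iff₀ (by positivity)] at h₁
    rw [lt_div_iff₀ hδ]
    nlinarith [le_abs_self B, abs_nonneg B]
  · rw [le_div_iff₀ (by positivity)] at h₂
    linarith
  · rw [le_div_iff₀ (by positivity)] at h₃
    nlinarith
  · rw [le_div_iff₀ (by positivity)] at h₃
    nlinarith

/-- Theorem A: if `asdim X ≤ n`, then for every `ε > 0` there is `δ > 0`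
such that every `δ`-partition of unity `f : X → K` sending `A` into `K^(n)` admits a
filler `h : X → K^(n)` that is an `ε`-partition of unity. -/
theorem theoremA (X : Type u) [MetricSpace X] (n : ℕ) (hX : AsdimLE X n) :
    ∀ ε : ℝ, 0 < ε → ∃ δ : ℝ, 0 < δ ∧
      ∀ (S : Type u) (K : Set (ellOne S)) (A : Set X) (f : X → ellOne S),
        IsSimplicialComplex K → IsDeltaPartitionOfUnity δ K f →
        (∀ a ∈ A, f a ∈ K ∩ skeleton S n) →
        ∃ h : X → ellOne S,
          (∀ x, h x ∈ K ∩ skeleton S n) ∧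
          (∀ a ∈ A, h a = f a) ∧
          (∀ x, support ((h x : S → ℝ)) ⊆ support ((f x : S → ℝ))) ∧
          IsDeltaPartitionOfUnity ε K h := by
  intro ε hε
  set T := 8 / ε with hTdef
  set L := 16 * (n + 1) / ε with hLdef
  have hT : 0 < T := by positivity
  have hL : 0 < L := by positivity
  obtain ⟨ι, U, hUne, ⟨B, hUB⟩, hUmult, hUleb⟩ := hX.exists_cover (R := L + T + 1) (by positivity)
  obtain ⟨δ, hδ, hδB, hδT, hδlip, hδconst⟩ := exists_small_delta (B := B) hε hT
  refine ⟨δ, hδ, fun S K A f hK hf hfA => ?_⟩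
  choose v hv using fun i => exists_subset_of_lt_lebesgue (hUne i) (hUB i)
    (((ENNReal.ofReal_lt_ofReal_iff (by positivity)).mpr hδB).trans_le hf.2.2.2)
  obtain ⟨g, hgΔ, hgcard, hglip, hgf, hgleb⟩ := exists_nerveMap_of_cover (m := n + 1)
    (V := fun w => f ⁻¹' star K w) v hv
    (by exact_mod_cast hUmult) hL hT.le
    (((ENNReal.ofReal_lt_ofReal_iff (by positivity)).mpr (lt_add_one _)).trans_le hUleb)
  have hb : 4 * ((n + 1 : ℕ) : ℝ) / L = ε / 4 := by
    rw [hLdef]; field_simp; push_cast; ring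
  refine exists_filler hK hδ.le hT hδT (b := ε / 4) (by rw [hTdef]; field_simp; linarith) hδconst hf
    (fun a ha => (hfA a ha).2) (fun x => ⟨hgΔ x, by exact_mod_cast hgcard x⟩)
    (fun x y => hb ▸ hglip x y) (fun x y hxy w hw => (hgf x y hxy w hw).2.ne') fun x => ?_
  refine (hgleb x).imp fun w hw z hz => hw z (hz.trans_le ?_)
  rw [hLdef]
  gcongr
  linarith

end
end

section
/- If g: X → Y is a coarse embedding of metric spaces and Y is large scale paracompact, then X is large scale paracompact. -/
open Function Metric ENNReal

noncomputable section

lemma norm_eq_one_of_mem_fullSimplex {S : Type u} {p : ellOne S}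
    (hp : p ∈ fullSimplex S) : ‖p‖ = 1 := by
  obtain ⟨h0, hfin, hsum⟩ := hp
  have h1 : (0:ℝ) < (1 : ℝ≥0∞).toReal := by norm_num
  rw [lp.norm_eq_tsum_rpow h1]
  simp only [ENNReal.toReal_one, Real.rpow_one, one_div_one]
  have : ∀ s, ‖(p : S → ℝ) s‖ = (p : S → ℝ) s := fun s => Real.norm_of_nonneg (h0 s)
  rw [tsum_congr this, hsum]

lemma dist_le_two_of_mem_fullSimplex {S : Type u} {p q : ellOne S}
    (hp : p ∈ fullSimplex S) (hq : q ∈ fullSimplex S) : dist p q ≤ 2 := by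
  rw [dist_eq_norm]
  calc ‖p - q‖ ≤ ‖p‖ + ‖q‖ := norm_sub_le p q
    _ = 2 := by
      rw [norm_eq_one_of_mem_fullSimplex hp, norm_eq_one_of_mem_fullSimplex hq]; norm_num

/-- large scale paracompactness pulls back along coarse embeddings. -/
theorem lsParacompact_of_coarseEmbedding {X Y : Type u} [MetricSpace X] [MetricSpace Y]
    (g : X → Y) (hg : CoarseEmbedding g) (hY : LSParacompact Y) :
    LSParacompact X := by
  obtain ⟨rm, rp, hrm, hrp, htend, hr⟩ := hg
  intro ι U hcover hUB l C hl hC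
  obtain ⟨M, hM⟩ := hUB
  set W : (ι ⊕ Y) → Set Y := fun j => Sum.elim (fun i => g '' U i) (fun y => {y}) j with hWdef
  have hWcover : IsCover W := fun y => ⟨Sum.inr y, rfl⟩
  have hWUB : UniformlyBounded W := by
    refine ⟨max (rp (max M 0)) 0, ?_⟩
    rintro (i | y) a ha b hb
    · obtain ⟨xa, hxa, rfl⟩ := ha
      obtain ⟨xb, hxb, rfl⟩ := hb
      refine le_trans (hr xa xb).2 (le_trans (hrp ?_) (le_max_left _ _))
      exact le_trans (hM i xa hxa xb hxb) (le_max_left _ _)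
    · simp only [W, Sum.elim_inr, Set.mem_singleton_iff] at ha hb
      subst ha; subst hb; simp [le_max_iff]
  set r : ℝ := 2 / l with hrdef
  set B : ℝ := max (rp r) 1 with hBdef
  have hB : 0 < B := lt_of_lt_of_le one_pos (le_max_right _ _)
  set l' : ℝ := C / (2 * B) with hl'def
  set C' : ℝ := C / 2 with hC'def
  have hl'pos : 0 < l' := by positivity
  obtain ⟨S, K, F, hK, hFK, hFlip, hFstar, hFU⟩ :=
    hY (ι ⊕ Y) W hWcover hWUB l' C' hl'pos (by positivity)
  refine ⟨S, K, F ∘ g, hK, fun x => hFK (g x), ?_, ?_, ?_⟩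
  · intro x y
    have hd2 : dist (F (g x)) (F (g y)) ≤ 2 :=
      dist_le_two_of_mem_fullSimplex (hK.1 (hFK _)) (hK.1 (hFK _))
    rcases le_or_gt r (dist x y) with h | h
    · have hlr : l * r = 2 := by rw [hrdef]; field_simp
      have : l * r ≤ l * dist x y := by nlinarith
      calc dist ((F ∘ g) x) ((F ∘ g) y) ≤ 2 := hd2
        _ ≤ l * dist x y + C := by nlinarith
    · have h1 : dist (g x) (g y) ≤ B :=
        le_trans (hr x y).2 (le_trans (hrp h.le) (le_max_left _ _))
      have h2 := hFlip (g x) (g y)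
      have h3 : dist (F (g x)) (F (g y)) ≤ l' * B + C' := by
        nlinarith [dist_nonneg (x := g x) (y := g y)]
      have hval : l' * B + C' = C := by
        rw [hl'def, hC'def]; field_simp; ring
      have hd0 : (0:ℝ) ≤ dist x y := dist_nonneg
      calc dist ((F ∘ g) x) ((F ∘ g) y) ≤ l' * B + C' := h3
        _ = C := hval
        _ ≤ l * dist x y + C := by nlinarith
  · obtain ⟨M', hM'⟩ := hFstar
    obtain ⟨T, hT⟩ := Filter.eventually_atTop.mp (htend.eventually_ge_atTop (M' + 1))
    refine ⟨max T 0, ?_⟩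
    intro v x hx y hy
    by_contra hlt
    push_neg at hlt
    have hTd : T ≤ dist x y := le_trans (le_max_left _ _) hlt.le
    have h1 : M' + 1 ≤ rm (dist x y) := hT _ hTd
    have h2 : rm (dist x y) ≤ dist (g x) (g y) := (hr x y).1
    have h3 : dist (g x) (g y) ≤ M' := hM' v (g x) hx (g y) hy
    linarith
  · intro i
    obtain ⟨v, hv⟩ := hFU (Sum.inl i)
    exact ⟨v, fun x hx => hv ⟨x, hx, rfl⟩⟩

end
end

section
/- Let X be a metric space and n ≥ 0. If for each δ > 0 there exist a set S and a (δ,δ)-Lipschitz map f: X → Δ(S)^(n) such that the family {f⁻¹(st(s)) : s ∈ S} is uniformly bounded, then X has asymptotic dimension at most n. -/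
open Function Metric ENNReal

noncomputable section

/- For small `δ`, every point `x` has a vertex `v` with `f x v ≥ 1/(n+1)` (at most `n+1`
coordinates sum to `1`), and the coarse Lipschitz bound keeps `f y v > 0` on a whole `R`-ball
around `x`. So the open stars pull back to a cover with Lebesgue number `≥ R`, and a point lies
in at most `n+1` of them because `f x` has at most `n+1` nonzero coordinates. -/

theorem lp.dist_apply_le {α : Type*} {E : α → Type*} [∀ i, NormedAddCommGroup (E i)]
    {p : ℝ≥0∞} [Fact (1 ≤ p)] (f g : lp E p) (i : α) : dist (f i) (g i) ≤ dist f g := by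
  simpa only [dist_eq_norm, lp.coeFn_sub, Pi.sub_apply] using
    lp.norm_apply_le_norm (zero_lt_one.trans_le Fact.out).ne' (f - g) i

theorem mem_star_iff {S : Type u} {K : Set (ellOne S)} {p : ellOne S} (hp : p ∈ K) (v : S) :
    p ∈ star K v ↔ 0 < p v :=
  and_iff_right hp

theorem exists_inv_succ_le_apply_of_mem_skeleton {S : Type u} {n : ℕ} {p : ellOne S}
    (hp : p ∈ skeleton S n) : ∃ v, ((n : ℝ) + 1)⁻¹ ≤ p v := by
  obtain ⟨⟨-, hfin, hsum⟩, hcard⟩ := hp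
  set T := hfin.toFinset
  have hsumT : ∑ s ∈ T, p s = 1 := by
    rw [← hsum, tsum_eq_sum (s := T)]
    simp [T]
  have hT : T.Nonempty := Finset.nonempty_of_sum_ne_zero (by rw [hsumT]; exact one_ne_zero)
  have hcardT : (T.card : ℝ) ≤ n + 1 := by
    rw [hfin.encard_eq_coe_toFinset_card] at hcard
    exact_mod_cast hcard
  obtain ⟨v, -, hv⟩ := Finset.exists_le_of_sum_le (f := fun _ => ((n : ℝ) + 1)⁻¹) hT <| by
    rw [hsumT, Finset.sum_const, nsmul_eq_mul, ← div_eq_mul_inv]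
    exact div_le_one_of_le₀ hcardT (by positivity)
  exact ⟨v, hv⟩

theorem IsLipschitzLC.apply_pos_of_dist_le {X : Type*} [MetricSpace X] {S : Type u}
    {l C : ℝ} {f : X → ellOne S} (hf : IsLipschitzLC l C f) (hl : 0 ≤ l) {x y : X} {R : ℝ}
    (hxy : dist x y ≤ R) {v : S} (hv : l * R + C < f x v) : 0 < f y v := by
  have hcoord : f x v - f y v ≤ l * dist x y + C :=
    calc f x v - f y v ≤ dist (f x v) (f y v) := (le_abs_self _).trans_eq (Real.dist_eq _ _).symm
      _ ≤ dist (f x) (f y) := lp.dist_apply_le _ _ v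
      _ ≤ l * dist x y + C := hf x y
  have := mul_le_mul_of_nonneg_left hxy hl
  linarith

section Covers

variable {X : Type*} [MetricSpace X] {ι : Type*} {U : ι → Set X}

theorem isCover_of_forall_ball_subset {R : ℝ} (hR : 0 < R) (h : ∀ x, ∃ i, ball x R ⊆ U i) :
    IsCover U := fun x =>
  (h x).imp fun _ hi => hi (mem_ball_self hR)

theorem ofReal_le_lebesgue_of_forall_ball_subset {R : ℝ} (h : ∀ x, ∃ i, ball x R ⊆ U i) :
    ENNReal.ofReal R ≤ lebesgue U := by
  refine le_iInf fun x => ?_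
  obtain ⟨i, hi⟩ := h x
  refine le_iSup_of_le i <| Metric.le_infEDist.2 fun y hy => ?_
  by_contra! hlt
  exact hy (hi (mem_ball'.2 (edist_lt_ofReal.1 hlt)))

theorem multiplicityLE_of_forall_encard_le {m : ℕ} (h : ∀ x, {i | x ∈ U i}.encard ≤ m) :
    MultiplicityLE U m := fun x =>
  (Set.encard_mono fun _ hi => by_contra fun hx => (infDist_zero_of_mem hx).not_gt hi).trans (h x)

end Covers

theorem multiplicityLE_preimage_star_skeleton {X : Type*} [MetricSpace X] {S : Type u} {n : ℕ}
    {f : X → ellOne S} (hf : ∀ x, f x ∈ skeleton S n) :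
    MultiplicityLE (fun s : S => f ⁻¹' star (skeleton S n) s) (n + 1) := by
  refine multiplicityLE_of_forall_encard_le fun x => ?_
  calc {s | x ∈ f ⁻¹' star (skeleton S n) s}.encard
      ≤ (support (f x : S → ℝ)).encard :=
        Set.encard_mono fun s hs => ((mem_star_iff (hf x) s).1 hs).ne'
    _ ≤ (n + 1 : ℕ) := by exact_mod_cast (hf x).2

/-- if for each `δ > 0` there is a `(δ, δ)`-Lipschitz map
`f : X → Δ(S)^(n)` with `{f⁻¹(st s)}` uniformly bounded, then `asdim X ≤ n`. -/
theorem asdimLE_of_skeleton_maps (X : Type u) [MetricSpace X] (n : ℕ)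
    (h : ∀ δ : ℝ, 0 < δ → ∃ (S : Type u) (f : X → ellOne S),
      (∀ x, f x ∈ skeleton S n) ∧ IsLipschitzLC δ δ f ∧
      UniformlyBounded (fun s : S => f ⁻¹' star (skeleton S n) s)) :
    AsdimLE X n := by
  intro R hR
  obtain ⟨δ, hδ, hδR⟩ := exists_pos_mul_lt (inv_pos.2 (n.cast_add_one_pos (α := ℝ))) (R + 1)
  obtain ⟨S, f, hf, hlip, hbdd⟩ := h δ hδ
  have hball : ∀ x, ∃ v, ball x R ⊆ f ⁻¹' star (skeleton S n) v := by
    intro x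
    obtain ⟨v, hv⟩ := exists_inv_succ_le_apply_of_mem_skeleton (hf x)
    refine ⟨v, fun y hy => (mem_star_iff (hf y) v).2 ?_⟩
    exact hlip.apply_pos_of_dist_le hδ.le (mem_ball'.1 hy).le (by linarith)
  exact ⟨S, _, isCover_of_forall_ball_subset hR hball, hbdd,
    multiplicityLE_preimage_star_skeleton hf, ofReal_le_lebesgue_of_forall_ball_subset hball⟩

end
end

section
/- Every large scale paracompact metric space has Property A. -/
open Function Metric ENNReal

noncomputable section

/-!
Apply large scale paracompactness to the cover of `X` by singletons with `λ R + C < ε`. The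
coordinates `φ_s(x) = f(x)(s)` of the resulting map `f : X → K ⊆ Δ(S)` form a partition of unity
whose `ℓ¹`-variation over `R`-close points is `dist (f x) (f y) ≤ λ R + C`, and whose supports are
the preimages of the stars, hence uniformly bounded.
-/

lemma ellOne.dist_eq_tsum_abs {S : Type u} (g h : ellOne S) :
    dist g h = ∑' s, |g s - h s| := by
  simp [dist_eq_norm, lp.norm_eq_tsum_rpow (p := 1) (by norm_num)]

lemma fullSimplex.apply_le_one {S : Type u} {p : ellOne S} (hp : p ∈ fullSimplex S) (s : S) :
    p s ≤ 1 :=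
  hp.2.2 ▸ (summable_of_hasFiniteSupport hp.2.1).le_tsum s fun t _ => hp.1 t

lemma IsLipschitzLC.hasVariation {X Y : Type*} [MetricSpace X] [MetricSpace Y] {f : X → Y}
    {l C R ε : ℝ} (hf : IsLipschitzLC l C f) (hl : 0 ≤ l) (hlt : l * R + C < ε) :
    HasVariation R ε f := fun x y hxy =>
  calc dist (f x) (f y) ≤ l * dist x y + C := hf x y
    _ ≤ l * R + C := by gcongr
    _ < ε := hlt

lemma propertyA_of_forall_simplex_map {X : Type u} [MetricSpace X]
    (H : ∀ R ε : ℝ, 0 < R → 0 < ε → ∃ (S : Type u) (f : X → ellOne S),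
      (∀ x, f x ∈ fullSimplex S) ∧ HasVariation R ε f ∧
        UniformlyBounded fun s => support fun x => f x s) :
    PropertyA X := by
  intro R ε hR hε
  obtain ⟨S, f, hf, hvar, M, hM⟩ := H R ε hR hε
  refine ⟨max M 1, S, fun s x => f x s, by positivity,
    fun s x => ⟨(hf x).1 s, fullSimplex.apply_le_one (hf x) s⟩,
    fun x => (hf x).2.1, fun x => (hf x).2.2, fun x y hxy => ?_,
    fun s x hx y hy => (hM s x hx y hy).trans (le_max_left M 1)⟩
  simpa only [ellOne.dist_eq_tsum_abs] using hvar x y hxy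

lemma LSParacompact.exists_simplex_map {X : Type u} [MetricSpace X] (h : LSParacompact X)
    {l C : ℝ} (hl : 0 < l) (hC : 0 < C) :
    ∃ (S : Type u) (f : X → ellOne S), (∀ x, f x ∈ fullSimplex S) ∧ IsLipschitzLC l C f ∧
      UniformlyBounded fun s => support fun x => f x s := by
  obtain ⟨S, K, f, hK, hfK, hLip, ⟨M, hM⟩, -⟩ :=
    h X (fun x => {x}) (fun x => ⟨x, rfl⟩) ⟨0, by simp⟩ l C hl hC
  have hf : ∀ x, f x ∈ fullSimplex S := fun x => hK.1 (hfK x)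
  have hsupp : ∀ s x, f x s ≠ 0 → f x ∈ star K s := fun s x hx =>
    ⟨hfK x, ((hf x).1 s).lt_of_ne' hx⟩
  exact ⟨S, f, hf, hLip, M, fun s x hx y hy => hM s x (hsupp s x hx) y (hsupp s y hy)⟩

/-- every large scale paracompact metric space has Property A. -/
theorem propertyA_of_lsParacompact (X : Type u) [MetricSpace X]
    (h : LSParacompact X) : PropertyA X := by
  refine propertyA_of_forall_simplex_map fun R ε hR hε => ?_
  obtain ⟨S, f, hf, hLip, hB⟩ :=
    h.exists_simplex_map (l := ε / (2 * R)) (C := ε / 4) (by positivity) (by positivity)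
  refine ⟨S, f, hf, hLip.hasVariation (by positivity) ?_, hB⟩
  have hhalf : ε / (2 * R) * R = ε / 2 := by field_simp
  linarith

end
end

section
/- Let X be a metric space, m a positive integer, and {f_s}_{s∈S} a family of 1-Lipschitz functions f_s: X → [0,∞) such that for every x ∈ X the set {s ∈ S : f_s(x) > 0} has at most m elements. Then the function F(x) = Σ_{s∈S} f_s(x) is well-defined and 2m-Lipschitz. -/
open Function Metric ENNReal

noncomputable section

theorem Function.support_eq_setOf_pos {α M : Type*} [PartialOrder M] [Zero M] {g : α → M}
    (hg : 0 ≤ g) : support g = {a | 0 < g a} := by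
  ext a
  exact (hg a).lt_iff_ne'.symm

theorem norm_tsum_sub_tsum_le_ncard_mul {S E : Type*} [SeminormedAddCommGroup E] {g h : S → E}
    (hg : (support g).Finite) (hh : (support h).Finite) {c : ℝ} (hc : ∀ s, ‖g s - h s‖ ≤ c) :
    ‖∑' s, g s - ∑' s, h s‖ ≤ (support g ∪ support h).ncard * c := by
  classical
  set T := (hg.union hh).toFinset
  have hgT : support g ⊆ T := by simp [T]
  have hhT : support h ⊆ T := by simp [T]
  rw [tsum_eq_sum' hgT, tsum_eq_sum' hhT, ← Finset.sum_sub_distrib,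
    Set.ncard_eq_toFinset_card _ (hg.union hh), ← nsmul_eq_mul]
  calc ‖∑ s ∈ T, (g s - h s)‖ ≤ ∑ s ∈ T, ‖g s - h s‖ := norm_sum_le _ _
    _ ≤ T.card • c := Finset.sum_le_card_nsmul _ _ _ fun s _ => hc s

theorem sum_lipschitz_general {X : Type*} [MetricSpace X] {S : Type u}
    (m : ℕ) (f : S → X → ℝ)
    (hf0 : ∀ s x, 0 ≤ f s x)
    (hfLip : ∀ s x y, |f s x - f s y| ≤ dist x y)
    (hmult : ∀ x, {s | 0 < f s x}.encard ≤ m) :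
    (∀ x, Summable fun s => f s x) ∧
      ∀ x y, |(∑' s, f s x) - ∑' s, f s y| ≤ (2 * m) * dist x y := by
  have hsupp (x : X) : (support fun s => f s x).Finite ∧ (support fun s => f s x).ncard ≤ m := by
    rw [support_eq_setOf_pos (hf0 · x), ← Set.encard_le_coe_iff_finite_ncard_le]
    exact hmult x
  refine ⟨fun x => summable_of_hasFiniteSupport (hsupp x).1, fun x y => ?_⟩
  have hcard : ((support fun s => f s x) ∪ support fun s => f s y).ncard ≤ 2 * m :=
    (Set.ncard_union_le _ _).trans (by linarith [(hsupp x).2, (hsupp y).2])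
  calc _ ≤ _ := norm_tsum_sub_tsum_le_ncard_mul (hsupp x).1 (hsupp y).1 (hfLip · x y)
    _ ≤ (2 * m) * dist x y := by gcongr; exact_mod_cast hcard

/-- a pointwise sum of `1`-Lipschitz nonnegative functions, at most `m` of
which are positive at any point, is well-defined and `2m`-Lipschitz. -/
theorem sum_lipschitz {X : Type*} [MetricSpace X] {S : Type u}
    (m : ℕ) (hm : 0 < m) (f : S → X → ℝ)
    (hf0 : ∀ s x, 0 ≤ f s x)
    (hfLip : ∀ s x y, |f s x - f s y| ≤ dist x y)
    (hmult : ∀ x, {s | 0 < f s x}.encard ≤ m) :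
    (∀ x, Summable fun s => f s x) ∧
      ∀ x y, |(∑' s, f s x) - ∑' s, f s y| ≤ (2 * m) * dist x y :=
  sum_lipschitz_general m f hf0 hfLip hmult

end
end

section
/- Let X be a metric space, R > 0, and A ⊆ X, and set C = X ∖ B(A,R). If both B(A,R) and B(C,R) are nonempty, then the Lebesgue number of the cover {B(A,R), B(C,R)} of X is at least R/2. -/
open Function Metric ENNReal

noncomputable section

section

variable {X : Type*} [PseudoMetricSpace X]

theorem ofReal_le_infEDist_compl_of_ball_subset {x : X} {r : ℝ} {U : Set X}
    (h : ball x r ⊆ U) : ENNReal.ofReal r ≤ infEDist x Uᶜ :=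
  le_infEDist.2 fun y hy => by
    rw [edist_dist]
    exact ENNReal.ofReal_le_ofReal (not_lt.1 fun hxy => hy (h (mem_ball'.2 hxy)))

/-- If the `r/2`-ball about `x` leaves `B`, it meets `Bᶜ` at a point `y`, and then it lies in
the `r`-ball about `y`. -/
theorem ball_half_subset_or_subset_thickening_compl (B : Set X) (x : X) (r : ℝ) :
    ball x (r / 2) ⊆ B ∨ ball x (r / 2) ⊆ thickening r Bᶜ := by
  refine or_iff_not_imp_left.2 fun h => ?_
  obtain ⟨y, hxy, hyB⟩ := Set.not_subset.1 h
  have hxy : dist x y < r / 2 := mem_ball'.1 hxy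
  exact (ball_subset_ball' (by linarith)).trans (ball_subset_thickening hyB r)

end

theorem ofReal_le_lebesgue_of_forall_exists_ball_subset {X ι : Type*} [MetricSpace X]
    {U : ι → Set X} {r : ℝ} (h : ∀ x, ∃ i, ball x r ⊆ U i) :
    ENNReal.ofReal r ≤ lebesgue U :=
  le_iInf fun x =>
    let ⟨i, hi⟩ := h x
    (ofReal_le_infEDist_compl_of_ball_subset hi).trans
      (le_iSup (fun i => infEDist x (U i)ᶜ) i)

theorem ofReal_half_le_lebesgue_thickening_compl {X : Type*} [MetricSpace X]
    (B : Set X) (r : ℝ) :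
    ENNReal.ofReal (r / 2) ≤ lebesgue (fun b : Bool => if b then B else thickening r Bᶜ) :=
  ofReal_le_lebesgue_of_forall_exists_ball_subset fun x =>
    (ball_half_subset_or_subset_thickening_compl B x r).elim (⟨true, ·⟩) (⟨false, ·⟩)

theorem lebesgue_two_set_cover_general {X : Type*} [MetricSpace X]
    (R : ℝ) (A : Set X) :
    ENNReal.ofReal (R / 2) ≤
      lebesgue (fun b : Bool =>
        if b then ⋃ a ∈ A, Metric.ball a R
        else ⋃ c ∈ (⋃ a ∈ A, Metric.ball a R)ᶜ, Metric.ball c R) := by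
  simp only [← thickening_eq_biUnion_ball]
  exact ofReal_half_le_lebesgue_thickening_compl _ R

/-- for `C = X ∖ B(A,R)`, the Lebesgue number of the cover
`{B(A,R), B(C,R)}` of `X` is at least `R/2` (provided both members are nonempty). -/
theorem lebesgue_two_set_cover {X : Type*} [MetricSpace X]
    (R : ℝ) (hR : 0 < R) (A : Set X)
    (hA : (⋃ a ∈ A, Metric.ball a R).Nonempty)
    (hC : (⋃ c ∈ (⋃ a ∈ A, Metric.ball a R)ᶜ, Metric.ball c R).Nonempty) :
    ENNReal.ofReal (R / 2) ≤
      lebesgue (fun b : Bool =>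
        if b then ⋃ a ∈ A, Metric.ball a R
        else ⋃ c ∈ (⋃ a ∈ A, Metric.ball a R)ᶜ, Metric.ball c R) :=
  lebesgue_two_set_cover_general R A

end
end

section
/- Let C and D be nonempty finite subsets of a set Z with |C| ≥ |D|. Then Σ_{z∈Z} | 1_C(z)/|C| − 1_D(z)/|D| | ≤ 2·|C Δ D|/|D|, where 1_C and 1_D are the indicator functions of C and D. -/
open Function Metric ENNReal

noncomputable section

/- Triangle inequality in `ℓ¹(Z)` through `1_C / |D|`: the first leg has mass
`|C| (1/|D| - 1/|C|) = (|C| - |D|) / |D| ≤ |C Δ D| / |D|`, the second is `|C Δ D| / |D|`. -/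

section IndicatorSums

variable {Z : Type*} [DecidableEq Z]

theorem abs_ite_mem_sub_ite_mem (A B : Finset Z) (z : Z) :
    |(if z ∈ A then (1 : ℝ) else 0) - (if z ∈ B then 1 else 0)|
      = if z ∈ symmDiff A B then 1 else 0 := by
  by_cases hA : z ∈ A <;> by_cases hB : z ∈ B <;> simp [Finset.mem_symmDiff, hA, hB]

theorem sum_ite_mem_of_subset {s t : Finset Z} (h : t ⊆ s) :
    ∑ z ∈ s, (if z ∈ t then (1 : ℝ) else 0) = t.card := by
  simp [Finset.sum_ite_mem, Finset.inter_eq_right.2 h]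

theorem card_le_card_symmDiff_add_card (C D : Finset Z) :
    C.card ≤ (symmDiff C D).card + D.card :=
  (Finset.card_le_card (le_symmDiff_sup_right C D)).trans (Finset.card_union_le _ _)

end IndicatorSums

theorem abs_div_sub_div_le {x y c d : ℝ} (hx : 0 ≤ x) (hd : 0 < d) (hdc : d ≤ c) :
    |x / c - y / d| ≤ x * (1 / d - 1 / c) + |x - y| / d := by
  have hxcd : x / c ≤ x / d := div_le_div_of_nonneg_left hx hd hdc
  calc |x / c - y / d| ≤ |x / c - x / d| + |x / d - y / d| := abs_sub_le _ _ _
    _ = x * (1 / d - 1 / c) + |x - y| / d := by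
      rw [abs_of_nonpos (sub_nonpos.2 hxcd), ← sub_div, abs_div, abs_of_pos hd]
      ring

theorem normalized_indicator_diff_le_general {Z : Type u} [DecidableEq Z]
    (C D : Finset Z) (hD : D.Nonempty)
    (hcard : D.card ≤ C.card) :
    ∑' z : Z,
        |(if z ∈ C then (1 : ℝ) else 0) / C.card - (if z ∈ D then (1 : ℝ) else 0) / D.card|
      ≤ 2 * (symmDiff C D).card / D.card := by
  have hd : (0 : ℝ) < D.card := by exact_mod_cast hD.card_pos
  have hdc : (D.card : ℝ) ≤ C.card := by exact_mod_cast hcard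
  have hsymm : (C.card : ℝ) ≤ (symmDiff C D).card + D.card := by
    exact_mod_cast card_le_card_symmDiff_add_card C D
  rw [tsum_eq_sum (s := C ∪ D) fun z hz => by simp_all]
  calc _ ≤ ∑ z ∈ C ∪ D, ((if z ∈ C then (1 : ℝ) else 0) * (1 / D.card - 1 / C.card)
          + (if z ∈ symmDiff C D then (1 : ℝ) else 0) / D.card) :=
        Finset.sum_le_sum fun z _ => by
          rw [← abs_ite_mem_sub_ite_mem]
          exact abs_div_sub_div_le (by positivity) hd hdc
    _ = C.card * (1 / D.card - 1 / C.card) + (symmDiff C D).card / D.card := by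
      rw [Finset.sum_add_distrib, ← Finset.sum_mul, ← Finset.sum_div,
        sum_ite_mem_of_subset Finset.subset_union_left,
        sum_ite_mem_of_subset symmDiff_le_sup]
    _ = (C.card - D.card + (symmDiff C D).card) / D.card := by
      field_simp [(hd.trans_le hdc).ne']
    _ ≤ 2 * (symmDiff C D).card / D.card := by gcongr; linarith

/-- for nonempty finite sets `C, D` with `|C| ≥ |D|`,
`Σ_z |1_C(z)/|C| − 1_D(z)/|D|| ≤ 2·|C Δ D|/|D|`. -/
theorem normalized_indicator_diff_le {Z : Type u} [DecidableEq Z]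
    (C D : Finset Z) (hC : C.Nonempty) (hD : D.Nonempty)
    (hcard : D.card ≤ C.card) :
    ∑' z : Z,
        |(if z ∈ C then (1 : ℝ) else 0) / C.card - (if z ∈ D then (1 : ℝ) else 0) / D.card|
      ≤ 2 * (symmDiff C D).card / D.card :=
  normalized_indicator_diff_le_general C D hD hcard

end
end
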